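/- For n ∈ ℤ let e_n(x) = (2π)^{-1/2} e^{inx} on [0,2π], extended by zero to ℝ, and let ê_n denote its unitary Fourier transform. Then |ê_n(k)|² = (1 − cos(2πk)) / (2π² (n − k)²) for k ≠ n, and the scaled partial sums satisfy lim_{N→∞} Σ_{n=−N}^{N} |ê_n(N k)|² = 1 for every real k with |k| < 1 and = 0 for every real k with |k| > 1; i.e. they converge pointwise off {|k| = 1} to the characteristic function of the Fermi ball of Ω = (0,2π), which has radius κ_F = 1. -/

import Mathlib

/-!
For `a ∈ ℝ`, the numbers `ê_{-n}(a)` are the Fourier coefficients on `[0, 2π]` of the unimodular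
function `x ↦ e^{-iax}`, so Parseval gives `∑ₘ |ê_m(a)|² = 1`. Evaluating the integral gives
`|ê_m(k)|² ≤ 1 / (π² (m - k)²)`. For `|k| > 1` each of the `2N + 1` terms with `|m| ≤ N` has
`|m - Nk| ≥ N (|k| - 1)`, so the sum is `O(1/N)`. For `|k| < 1` the terms with `|m| > N` have
`|m - Nk| ≥ |m| (1 - |k|)`, so the tails are dominated, uniformly in `N`, by a summable `C / m²`;
they tend to `0`, and by Parseval the partial sums tend to `1`.
-/

open MeasureTheory Filter Complex
open scoped Real BigOperators Topology

noncomputable section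

/-- The unitary Fourier transform of `e_n(x) = (2π)^{-1/2} e^{inx} χ_{[0,2π]}(x)`:
`ê_n(k) = (1/(2π)) ∫_0^{2π} e^{i(n−k)x} dx`. -/
def ehat (m : ℤ) (k : ℝ) : ℂ :=
  (1 / (2 * (Real.pi : ℂ))) *
    ∫ x in (0 : ℝ)..(2 * Real.pi), Complex.exp (Complex.I * ((m : ℂ) - (k : ℂ)) * x)

theorem tendsto_sum_of_hasSum_of_le_compl {α ι : Type*} {l : Filter α} {f : α → ι → ℝ}
    {g : ι → ℝ} {s : α → Finset ι} {a : ℝ} (hf : ∀ N, HasSum (f N) a) (hf0 : ∀ N i, 0 ≤ f N i)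
    (hfg : ∀ N, ∀ i ∉ s N, f N i ≤ g i) (hg : Summable g) (hs : Tendsto s l atTop) :
    Tendsto (fun N => ∑ i ∈ s N, f N i) l (𝓝 a) := by
  have htail : ∀ N, a - ∑ i ∈ s N, f N i = ∑' i : {i // i ∉ s N}, f N i := fun N => by
    rw [← (hf N).tsum_eq, ← (hf N).summable.sum_add_tsum_subtype_compl (s N), add_sub_cancel_left]
  have hlim : Tendsto (fun N => a - ∑ i ∈ s N, f N i) l (𝓝 0) := by
    refine squeeze_zero (fun N => ?_) (fun N => ?_) ((tendsto_tsum_compl_atTop_zero g).comp hs)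
    · rw [htail]
      exact tsum_nonneg fun i => hf0 N i
    · rw [htail]
      exact (hf N).summable.subtype _ |>.tsum_le_tsum (fun i => hfg N i i.2) (hg.subtype _)
  simpa using (tendsto_const_nhds (x := a)).sub hlim

theorem ehat_eq_of_ne {m : ℤ} {k : ℝ} (h : k ≠ m) :
    ehat m k = (exp (I * (2 * π * (m - k) : ℝ)) - 1) / (I * (2 * π * (m - k) : ℝ)) := by
  have hmk : (m : ℂ) - k ≠ 0 := by
    rw [sub_ne_zero]; exact_mod_cast h.symm
  rw [ehat, integral_exp_mul_complex (mul_ne_zero I_ne_zero hmk), ofReal_zero, mul_zero, exp_zero]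
  push_cast
  field_simp

theorem norm_ehat_sq {m : ℤ} {k : ℝ} (h : k ≠ m) :
    ‖ehat m k‖ ^ 2 = (1 - Real.cos (2 * π * k)) / (2 * π ^ 2 * ((m : ℝ) - k) ^ 2) := by
  rw [ehat_eq_of_ne h, norm_div, norm_exp_I_mul_ofReal_sub_one]
  set θ : ℝ := 2 * π * (m - k) with hθ
  have hcos : Real.cos θ = Real.cos (2 * π * k) := by
    rw [show θ = m * (2 * π) - 2 * π * k by ring, Real.cos_int_mul_two_pi_sub]
  have hsin : (2 : ℝ) ^ 2 * Real.sin (θ / 2) ^ 2 = 2 * (1 - Real.cos θ) := by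
    have h2 := Real.cos_two_mul' (θ / 2)
    rw [mul_div_cancel₀ θ two_ne_zero] at h2
    linear_combination 2 * h2 + 2 * Real.sin_sq_add_cos_sq (θ / 2)
  have hmk : (m : ℝ) - k ≠ 0 := sub_ne_zero.mpr h.symm
  simp only [norm_mul, norm_I, one_mul, norm_real, Real.norm_eq_abs, div_pow, mul_pow, sq_abs]
  rw [hsin, hcos, hθ]
  field_simp

theorem norm_ehat_sq_le {m : ℤ} {k d : ℝ} (hd : 0 < d) (h : d ≤ |m - k|) :
    ‖ehat m k‖ ^ 2 ≤ 1 / (π ^ 2 * d ^ 2) := by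
  have hmk : k ≠ m := fun hk => by simp [hk] at h; linarith
  rw [norm_ehat_sq hmk]
  have hcos := Real.neg_one_le_cos (2 * π * k)
  have hsq : d ^ 2 ≤ ((m : ℝ) - k) ^ 2 := by
    simpa only [sq_abs] using pow_le_pow_left₀ hd.le h 2
  calc (1 - Real.cos (2 * π * k)) / (2 * π ^ 2 * ((m : ℝ) - k) ^ 2)
      ≤ 2 / (2 * π ^ 2 * d ^ 2) := by gcongr; linarith
    _ = 1 / (π ^ 2 * d ^ 2) := by field_simp

theorem ehat_neg_eq_fourierCoeffOn (n : ℤ) (a : ℝ) :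
    ehat (-n) a = fourierCoeffOn Real.two_pi_pos (fun x : ℝ => exp (-(I * a * x))) n := by
  rw [fourierCoeffOn_eq_integral, ehat, sub_zero]
  congr 1
  · simp
  · refine intervalIntegral.integral_congr fun x _ => ?_
    rw [fourier_coe_apply, smul_eq_mul, ← exp_add]
    congr 1
    field_simp
    push_cast
    ring

theorem hasSum_norm_ehat_sq (a : ℝ) : HasSum (fun m : ℤ => ‖ehat m a‖ ^ 2) 1 := by
  set f : ℝ → ℂ := fun x => exp (-(I * a * x))
  have hf : ∀ x, ‖f x‖ = 1 := fun x => by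
    simp [f, norm_exp]
  have hL2 : MemLp f 2 (volume.restrict (Set.Ioc 0 (2 * π))) :=
    .of_bound (by fun_prop : Continuous f).aestronglyMeasurable 1 (ae_of_all _ fun x => (hf x).le)
  have h := hasSum_sq_fourierCoeffOn Real.two_pi_pos hL2
  simp only [hf, one_pow, intervalIntegral.integral_const, smul_eq_mul, mul_one, sub_zero] at h
  rw [inv_mul_cancel₀ Real.two_pi_pos.ne'] at h
  rw [← (Equiv.neg ℤ).hasSum_iff]
  simpa [Function.comp_def, ehat_neg_eq_fourierCoeffOn] using h

theorem tendsto_sum_norm_ehat_sq_of_abs_lt_one {k : ℝ} (hk : |k| < 1) :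
    Tendsto (fun N : ℕ => ∑ m ∈ Finset.Icc (-(N : ℤ)) N, ‖ehat m (N * k)‖ ^ 2) atTop (𝓝 1) := by
  have hk' : 0 < 1 - |k| := sub_pos.mpr hk
  refine tendsto_sum_of_hasSum_of_le_compl
    (g := fun m : ℤ => 1 / (π ^ 2 * (|(m : ℝ)| * (1 - |k|)) ^ 2))
    (fun N => hasSum_norm_ehat_sq _) (fun _ _ => sq_nonneg _) (fun N m hm => ?_) ?_
    Finset.tendsto_Icc_neg
  · have hNm : (N : ℝ) < |(m : ℝ)| := by
      rw [Finset.mem_Icc] at hm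
      rw [← not_le, abs_le]
      exact_mod_cast hm
    have hm0 : 0 < |(m : ℝ)| := N.cast_nonneg.trans_lt hNm
    refine norm_ehat_sq_le (by positivity) ?_
    calc |(m : ℝ)| * (1 - |k|) ≤ |(m : ℝ)| - |N * k| := by
          rw [abs_mul, Nat.abs_cast]; nlinarith [abs_nonneg k]
      _ ≤ |m - N * k| := abs_sub_abs_le_abs_sub _ _
  · refine ((Real.summable_one_div_int_pow.mpr one_lt_two).mul_left
      (π ^ 2 * (1 - |k|) ^ 2)⁻¹).congr fun m => ?_
    simp only [mul_pow, sq_abs, one_div, mul_inv]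
    ring

theorem tendsto_sum_norm_ehat_sq_of_one_lt_abs {k : ℝ} (hk : 1 < |k|) :
    Tendsto (fun N : ℕ => ∑ m ∈ Finset.Icc (-(N : ℤ)) N, ‖ehat m (N * k)‖ ^ 2) atTop (𝓝 0) := by
  have hk' : 0 < |k| - 1 := sub_pos.mpr hk
  set C := 1 / (π ^ 2 * (|k| - 1) ^ 2)
  have hbound : ∀ N : ℕ, 0 < N →
      ∑ m ∈ Finset.Icc (-(N : ℤ)) N, ‖ehat m (N * k)‖ ^ 2 ≤
        C * (2 * (N : ℝ)⁻¹ + (N : ℝ)⁻¹ ^ 2) := by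
    intro N hN
    have hterm : ∀ m ∈ Finset.Icc (-(N : ℤ)) N,
        ‖ehat m (N * k)‖ ^ 2 ≤ 1 / (π ^ 2 * (N * (|k| - 1)) ^ 2) := fun m hm => by
      have hmN : |(m : ℝ)| ≤ N := by
        rw [Finset.mem_Icc] at hm
        rw [abs_le]
        exact_mod_cast hm
      refine norm_ehat_sq_le (by positivity) ?_
      calc (N : ℝ) * (|k| - 1) ≤ |N * k| - |(m : ℝ)| := by
            rw [abs_mul, Nat.abs_cast]; linarith
        _ ≤ |m - N * k| := by rw [abs_sub_comm]; exact abs_sub_abs_le_abs_sub _ _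
    have hcard : (Finset.Icc (-(N : ℤ)) N).card = 2 * N + 1 := by
      rw [Int.card_Icc]; omega
    calc ∑ m ∈ Finset.Icc (-(N : ℤ)) N, ‖ehat m (N * k)‖ ^ 2
        ≤ (Finset.Icc (-(N : ℤ)) N).card • (1 / (π ^ 2 * (N * (|k| - 1)) ^ 2)) :=
          Finset.sum_le_card_nsmul _ _ _ hterm
      _ = C * (2 * (N : ℝ)⁻¹ + (N : ℝ)⁻¹ ^ 2) := by
          rw [hcard, nsmul_eq_mul]
          have hN0 : (N : ℝ) ≠ 0 := by positivity
          push_cast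
          simp only [C]
          field_simp
  have hlim : Tendsto (fun N : ℕ => C * (2 * (N : ℝ)⁻¹ + (N : ℝ)⁻¹ ^ 2)) atTop (𝓝 0) := by
    simpa using ((tendsto_inv_atTop_nhds_zero_nat.const_mul 2).add
      (tendsto_inv_atTop_nhds_zero_nat.pow 2)).const_mul C
  exact squeeze_zero' (.of_forall fun N => Finset.sum_nonneg fun m _ => sq_nonneg _)
    ((eventually_gt_atTop 0).mono hbound) hlim

/-- `|ê_n(k)|² = (1 − cos(2πk))/(2π²(n−k)²)` for `k ≠ n`, and the scaled sums
`Σ_{n=−N}^{N} |ê_n(Nk)|²` converge to `1` for `|k| < 1` and to `0` for `|k| > 1`,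
i.e. to the characteristic function of the Fermi ball of `Ω = (0,2π)` (radius `κ_F = 1`). -/
theorem exponential_basis_fermi_ball :
    (∀ (m : ℤ) (k : ℝ), k ≠ (m : ℝ) →
        ‖ehat m k‖ ^ 2 =
          (1 - Real.cos (2 * Real.pi * k)) / (2 * Real.pi ^ 2 * ((m : ℝ) - k) ^ 2)) ∧
      (∀ k : ℝ, |k| < 1 →
        Tendsto (fun N : ℕ => ∑ m ∈ Finset.Icc (-(N : ℤ)) (N : ℤ), ‖ehat m ((N : ℝ) * k)‖ ^ 2)
          atTop (𝓝 1)) ∧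
      (∀ k : ℝ, 1 < |k| →
        Tendsto (fun N : ℕ => ∑ m ∈ Finset.Icc (-(N : ℤ)) (N : ℤ), ‖ehat m ((N : ℝ) * k)‖ ^ 2)
          atTop (𝓝 0)) :=
  ⟨fun _ _ => norm_ehat_sq, fun _ => tendsto_sum_norm_ehat_sq_of_abs_lt_one,
    fun _ => tendsto_sum_norm_ehat_sq_of_one_lt_abs⟩
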